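/- arXiv:1705.06555 — 2 statements merged into one kernel-verified Lean document; each statement's English description precedes it below -/
import Mathlib

section
/- Let T be a Cuntz semigroup and S'₀ ⊆ T a countable submonoid consisting of compact elements of T. Let S' be the set of suprema in T of increasing sequences from S'₀. Then S' is closed under suprema of increasing sequences: if (x_n) is an increasing sequence in S', then sup_n x_n (computed in T) belongs to S'. -/
/-- `x` is compactly contained in `y`: whenever an increasing sequence has a supremum
dominating `y`, some term dominates `x`. -/
def CC {M : Type*} [Preorder M] (x y : M) : Prop :=
  ∀ f : ℕ → M, Monotone f → ∀ s : M, IsLUB (Set.range f) s → y ≤ s → ∃ n, x ≤ f n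

/-- An element is compact if it is compactly contained in itself. -/
def IsCpt {M : Type*} [Preorder M] (x : M) : Prop := CC x x

/-- A Cuntz semigroup: a positively ordered monoid with suprema of increasing sequences,
rapidly increasing approximations, and additivity of suprema and of `CC`. -/
class CuSemigroup (S : Type*) extends AddCommMonoid S, PartialOrder S, IsOrderedAddMonoid S where
  zero_le' : ∀ x : S, 0 ≤ x
  seqSup : ∀ f : ℕ → S, Monotone f → ∃ s : S, IsLUB (Set.range f) s
  rapid : ∀ x : S, ∃ f : ℕ → S, Monotone f ∧ (∀ n, CC (f n) (f (n + 1))) ∧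
    IsLUB (Set.range f) x
  supAdd : ∀ f g : ℕ → S, Monotone f → Monotone g → ∀ a b : S, IsLUB (Set.range f) a →
    IsLUB (Set.range g) b → IsLUB (Set.range fun n => f n + g n) (a + b)
  ccAdd : ∀ x x' y y' : S, CC x x' → CC y y' → CC (x + y) (x' + y')

/-!
Choose increasing sequences `h n` in `S₀` with suprema `f n`. Every `h n k` is compact and lies
below `x`, so two of them lie below a common `f N` and hence below a common `h N K`: the countable
family `h` is directed. Its cofinal increasing sequence (`Directed.sequence`) has the same supremum
as the whole family, namely `x`.
-/

section Preorder

variable {M : Type*} [Preorder M]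

theorem IsCpt.exists_le_of_le_isLUB {a s : M} {f : ℕ → M} (ha : IsCpt a) (hf : Monotone f)
    (hs : IsLUB (Set.range f) s) (has : a ≤ s) : ∃ n, a ≤ f n :=
  ha f hf s hs has

theorem exists_le_and_le_of_isCpt_of_isLUB {a b s : M} {f : ℕ → M} (ha : IsCpt a) (hb : IsCpt b)
    (hf : Monotone f) (hs : IsLUB (Set.range f) s) (has : a ≤ s) (hbs : b ≤ s) :
    ∃ n, a ≤ f n ∧ b ≤ f n := by
  obtain ⟨m, ham⟩ := ha.exists_le_of_le_isLUB hf hs has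
  obtain ⟨n, hbn⟩ := hb.exists_le_of_le_isLUB hf hs hbs
  exact ⟨max m n, ham.trans (hf (le_max_left m n)), hbn.trans (hf (le_max_right m n))⟩

theorem isLUB_range_uncurry {x : M} {f : ℕ → M} {h : ℕ → ℕ → M}
    (hx : IsLUB (Set.range f) x) (hh : ∀ n, IsLUB (Set.range (h n)) (f n)) :
    IsLUB (Set.range (Function.uncurry h)) x := by
  convert (isLUB_iUnion_iff_of_isLUB hh x).1 hx using 1
  ext y
  simp [Prod.exists]

theorem directed_of_isCpt_of_isLUB {x : M} {f : ℕ → M} {h : ℕ → ℕ → M} (hf : Monotone f)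
    (hx : IsLUB (Set.range f) x) (hh : ∀ n, Monotone (h n))
    (hhf : ∀ n, IsLUB (Set.range (h n)) (f n)) (hcpt : ∀ n k, IsCpt (h n k)) :
    Directed (· ≤ ·) (Function.uncurry h) := by
  rintro ⟨n, k⟩ ⟨n', k'⟩
  have hle : ∀ n k, h n k ≤ x := fun n k => ((hhf n).1 ⟨k, rfl⟩).trans (hx.1 ⟨n, rfl⟩)
  obtain ⟨N, hN, hN'⟩ :=
    exists_le_and_le_of_isCpt_of_isLUB (hcpt n k) (hcpt n' k') hf hx (hle n k) (hle n' k')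
  obtain ⟨K, hK, hK'⟩ := exists_le_and_le_of_isCpt_of_isLUB (hcpt n k) (hcpt n' k') (hh N) (hhf N)
    hN hN'
  exact ⟨(N, K), hK, hK'⟩

theorem Directed.isLUB_range_sequence {α : Type*} [Encodable α] [Inhabited α] {F : α → M}
    {x : M} (hF : Directed (· ≤ ·) F) (hx : IsLUB (Set.range F) x) :
    IsLUB (Set.range (F ∘ hF.sequence F)) x := by
  refine ⟨?_, fun b hb => hx.2 ?_⟩
  · rintro _ ⟨m, rfl⟩
    exact hx.1 ⟨_, rfl⟩
  · rintro _ ⟨a, rfl⟩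
    exact (hF.le_sequence a).trans (hb ⟨_, rfl⟩)

end Preorder

theorem stmt5_general {T : Type*} [CuSemigroup T] (S₀ : AddSubmonoid T)
    (hS₀cpt : ∀ a ∈ S₀, IsCpt a)
    (S' : Set T)
    (hS' : S' = {z : T | ∃ h : ℕ → T, Monotone h ∧ (∀ n, h n ∈ S₀) ∧ IsLUB (Set.range h) z})
    (f : ℕ → T) (hf : Monotone f) (hfS : ∀ n, f n ∈ S')
    (x : T) (hx : IsLUB (Set.range f) x) :
    x ∈ S' := by
  subst hS'
  choose h hh hmem hhf using hfS
  have hdir := directed_of_isCpt_of_isLUB hf hx hh hhf fun n k => hS₀cpt _ (hmem n k)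
  exact ⟨_, hdir.sequence_mono, fun m => hmem _ _,
    hdir.isLUB_range_sequence (isLUB_range_uncurry hx hhf)⟩

/-- The set of suprema of increasing sequences from a countable submonoid of compact
elements is closed under suprema of increasing sequences. -/
theorem stmt5 {T : Type*} [CuSemigroup T] (S₀ : AddSubmonoid T)
    (hS₀cpt : ∀ a ∈ S₀, IsCpt a) (hS₀ctble : (S₀ : Set T).Countable)
    (S' : Set T)
    (hS' : S' = {z : T | ∃ h : ℕ → T, Monotone h ∧ (∀ n, h n ∈ S₀) ∧ IsLUB (Set.range h) z})
    (f : ℕ → T) (hf : Monotone f) (hfS : ∀ n, f n ∈ S')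
    (x : T) (hx : IsLUB (Set.range f) x) :
    x ∈ S' :=
  stmt5_general S₀ hS₀cpt S' hS' f hf hfS x hx
end

section
/- Let T be a Cuntz semigroup, S'₀ ⊆ T a submonoid of compact elements, and S' ⊆ T the set of suprema of increasing sequences from S'₀, with the order inherited from T. Then for x, y ∈ S', compact containment x ≪ y computed in S' holds if and only if x ≪ y computed in T holds. -/
/-- Compact containment relative to a subset `P`: only increasing sequences in `P` whose
supremum lies in `P` are tested. -/
def CCrel {M : Type*} [Preorder M] (P : Set M) (x y : M) : Prop :=
  ∀ f : ℕ → M, Monotone f → (∀ n, f n ∈ P) → ∀ s : M, s ∈ P → IsLUB (Set.range f) s →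
    y ≤ s → ∃ n, x ≤ f n

section CompactContainment

variable {M : Type*} [Preorder M]

theorem CC.mono {x x' y y' : M} (h : CC x y) (hx : x' ≤ x) (hy : y ≤ y') : CC x' y' :=
  fun f hf s hs hys => (h f hf s hs (hy.trans hys)).imp fun _ => hx.trans

theorem IsCpt.cc_of_le {c x y : M} (hc : IsCpt c) (hxc : x ≤ c) (hcy : c ≤ y) : CC x y :=
  CC.mono hc hxc hcy

theorem CC.ccRel {x y : M} (h : CC x y) (P : Set M) : CCrel P x y :=
  fun f hf _ s _ => h f hf s

theorem CCrel.cc_of_isLUB_of_isCpt {P : Set M} {x y : M} {h : ℕ → M} (hrel : CCrel P x y)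
    (hmono : Monotone h) (hP : ∀ n, h n ∈ P) (hcpt : ∀ n, IsCpt (h n)) (hy : y ∈ P)
    (hlub : IsLUB (Set.range h) y) : CC x y := by
  obtain ⟨n, hxn⟩ := hrel h hmono hP y hy hlub le_rfl
  exact (hcpt n).cc_of_le hxn (hlub.1 ⟨n, rfl⟩)

end CompactContainment

theorem stmt6_general {T : Type*} [CuSemigroup T] (S₀ : AddSubmonoid T)
    (hS₀ : ∀ a ∈ S₀, IsCpt a)
    (S' : Set T)
    (hS' : S' = {z : T | ∃ h : ℕ → T, Monotone h ∧ (∀ n, h n ∈ S₀) ∧ IsLUB (Set.range h) z})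
    (x y : T) (hy : y ∈ S') :
    CCrel S' x y ↔ CC x y := by
  refine ⟨fun hrel => ?_, fun hcc => hcc.ccRel S'⟩
  obtain ⟨h, hmono, hmem, hlub⟩ := hS' ▸ hy
  have hmemS' : ∀ n, h n ∈ S' := fun n => hS' ▸
    ⟨fun _ => h n, monotone_const, fun _ => hmem n, by simp⟩
  exact hrel.cc_of_isLUB_of_isCpt hmono hmemS' (fun n => hS₀ _ (hmem n)) hy hlub

/-- For elements of the set `S'` of suprema of increasing sequences from a submonoid of
compact elements, compact containment computed in `S'` agrees with compact containment
computed in `T`. -/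
theorem stmt6 {T : Type*} [CuSemigroup T] (S₀ : AddSubmonoid T)
    (hS₀ : ∀ a ∈ S₀, IsCpt a)
    (S' : Set T)
    (hS' : S' = {z : T | ∃ h : ℕ → T, Monotone h ∧ (∀ n, h n ∈ S₀) ∧ IsLUB (Set.range h) z})
    (x y : T) (hx : x ∈ S') (hy : y ∈ S') :
    CCrel S' x y ↔ CC x y :=
  stmt6_general S₀ hS₀ S' hS' x y hy
end
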